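/- Assume that λ vanishes identically on some interval (−∞, T], that ω₀ = 1, and that σ is fine-tuned so that m + 2·(κ²/n²)·σ·ρ₀ = 0. Then every brane scale function f satisfies lim_{τ→0⁻} f′(τ)²·e^{2n·f(τ)} = (κ²/n²)·ρ₀², and for every τ with f(τ) ≤ T the identity f″ + n·f′² = (2Λ/n)·e^{2f} − n·κ̃ + (κ²/n²)·(n+1)·σ²·e^{2f} holds; consequently f satisfies the ARW conditions with constant γ̃ = n and mass m̃ = (κ²/n²)·ρ₀². -/

import Mathlib

/-!
With `ω₀ = 1` and `μ̃ = 0` below `T`, the fine-tuning `m + 2 (κ²/n²) σ ρ₀ = 0` cancels the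
`e^{-(n-1)f}` term of the Friedmann equation, which becomes `f'² = m̃ e^{-2nf} + C e^{2f} - κ̃`
with `m̃ = (κ²/n²) ρ₀²` and `C = 2Λ/(n(n+1)) + (κ²/n²) σ²`. Differentiating gives
`f'' = -n m̃ e^{-2nf} + C e^{2f}`, so `f'' + n f'² = (n+1) C e^{2f} - n κ̃`, which tends to `-n κ̃`.
Near the singularity `|f'| ≥ 1`, `e^{2f} ≤ 1` and `e^{-2nf} ≤ (2/m̃) f'²`, so a polynomial in `f'`,
`e^{2f}`, `e^{-2nf}` in which `f'` has weight 1 and `e^{-2nf}` weight 2 is `O(|f'|^weight)`; by the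
equation for `f''`, differentiating such a polynomial raises its weight by one.
-/

/-- `f` satisfies the ARW conditions with constant `γ > 0` and mass `mt > 0`:
`f'² e^{2γf} → mt` as `τ → 0⁻`, the limit of `f'' + γ f'²` exists, and the iterated
derivatives of `f'' + γ f'²` and of `f` of order `k ≥ 1` are bounded by `c_k |f'|^k`
near the singularity. -/
def ARWConds (γ mt : ℝ) (f : ℝ → ℝ) : Prop :=
  Filter.Tendsto (fun τ => (deriv f τ) ^ 2 * Real.exp (2 * γ * f τ))
      (nhdsWithin 0 (Set.Iio 0)) (nhds mt)
  ∧ (∃ L : ℝ, Filter.Tendsto (fun τ => deriv (deriv f) τ + γ * (deriv f τ) ^ 2)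
      (nhdsWithin 0 (Set.Iio 0)) (nhds L))
  ∧ ∃ δ : ℝ, 0 < δ ∧ ∀ k : ℕ, 1 ≤ k → ∃ c : ℝ,
      ∀ τ ∈ Set.Ioo (-δ) (0:ℝ),
        |iteratedDeriv k (fun s => deriv (deriv f) s + γ * (deriv f s) ^ 2) τ|
            ≤ c * |deriv f τ| ^ k
        ∧ |iteratedDeriv k f τ| ≤ c * |deriv f τ| ^ k

open Filter Topology Set Real

theorem eq_zero_of_hasDerivAt_of_tendsto_atBot {μ g : ℝ → ℝ} {T : ℝ}
    (hμ : ∀ t, HasDerivAt μ (g t) t) (hg : ∀ t ≤ T, g t = 0)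
    (hμ0 : Tendsto μ atBot (𝓝 0)) {t : ℝ} (ht : t ≤ T) : μ t = 0 := by
  have hconst : ∀ s ≤ T, μ s = μ T := fun s hs =>
    (constant_of_has_deriv_right_zero (fun x _ => (hμ x).continuousAt.continuousWithinAt)
      (fun x hx => hg x hx.2.le ▸ (hμ x).hasDerivWithinAt) T ⟨hs, le_rfl⟩).symm
  have hT : μ T = 0 :=
    tendsto_nhds_unique tendsto_const_nhds <|
      hμ0.congr' (by filter_upwards [eventually_le_atBot T] with s hs using hconst s hs)
  rw [hconst t ht, hT]

noncomputable def reducedPotential (N M C κt x : ℝ) : ℝ :=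
  M * exp (-(2 * N) * x) + C * exp (2 * x) - κt

theorem hasDerivAt_reducedPotential (N M C κt x : ℝ) :
    HasDerivAt (reducedPotential N M C κt)
      (2 * (-(N * M) * exp (-(2 * N) * x) + C * exp (2 * x))) x := by
  have h := ((((hasDerivAt_id' x).const_mul (-(2 * N))).exp.const_mul M).fun_add
    (((hasDerivAt_id' x).const_mul 2).exp.const_mul C)).sub_const κt
  exact h.congr_deriv (by ring)

theorem friedmann_eq_reducedPotential {N m A κt q σ ρ₀ : ℝ}
    (hfine : m + 2 * q * σ * ρ₀ = 0) (x : ℝ) :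
    m * exp (-(N - 1) * x) + A * exp (2 * x) - κt
        + q * (σ + ρ₀ * exp (-(N + 1) * x)) ^ 2 * exp (2 * x)
      = reducedPotential N (q * ρ₀ ^ 2) (A + q * σ ^ 2) κt x := by
  have h1 : exp (-(N + 1) * x) * exp (2 * x) = exp (-(N - 1) * x) := by
    rw [← exp_add]; ring_nf
  have h2 : exp (-(N + 1) * x) ^ 2 * exp (2 * x) = exp (-(2 * N) * x) := by
    rw [← exp_nat_mul, ← exp_add]; push_cast; ring_nf
  unfold reducedPotential
  linear_combination exp (-(N - 1) * x) * hfine + 2 * q * σ * ρ₀ * h1 + q * ρ₀ ^ 2 * h2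

theorem two_mul_deriv_deriv_eq_of_sq_deriv_eq {f V : ℝ → ℝ} {τ d : ℝ}
    (hf : DifferentiableAt ℝ f τ) (hf' : DifferentiableAt ℝ (deriv f) τ)
    (hne : deriv f τ ≠ 0) (hV : HasDerivAt V d (f τ))
    (heq : ∀ᶠ s in 𝓝[≥] τ, deriv f s ^ 2 = V (f s)) :
    2 * deriv (deriv f) τ = d := by
  have hsq : HasDerivWithinAt (fun s => deriv f s ^ 2)
      (2 * deriv f τ * deriv (deriv f) τ) (Ici τ) τ := by
    simpa using (hf'.hasDerivAt.fun_pow 2).hasDerivWithinAt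
  have hVf : HasDerivWithinAt (fun s => deriv f s ^ 2) (d * deriv f τ) (Ici τ) τ :=
    (hV.comp τ hf.hasDerivAt).hasDerivWithinAt.congr_of_eventuallyEq heq
      (heq.self_of_nhdsWithin self_mem_Ici)
  have := (uniqueDiffWithinAt_Ici τ).eq_deriv _ hsq hVf
  apply mul_right_cancel₀ hne
  linear_combination this

theorem deriv_deriv_eq_of_sq_deriv_eq_reducedPotential {f : ℝ → ℝ} {a b T N M C κt τ : ℝ}
    (hdf : ∀ τ ∈ Ioo a b, DifferentiableAt ℝ f τ)
    (hdf' : ∀ τ ∈ Ioo a b, DifferentiableAt ℝ (deriv f) τ)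
    (hf' : ∀ τ ∈ Ioo a b, deriv f τ < 0)
    (hV : ∀ τ ∈ Ioo a b, f τ ≤ T → deriv f τ ^ 2 = reducedPotential N M C κt (f τ))
    (hτ : τ ∈ Ioo a b) (hfT : f τ ≤ T) :
    deriv (deriv f) τ = -(N * M) * exp (-(2 * N) * f τ) + C * exp (2 * f τ) := by
  have hanti : AntitoneOn f (Ioo a b) :=
    antitoneOn_of_deriv_nonpos (convex_Ioo a b)
      (fun s hs => (hdf s hs).continuousAt.continuousWithinAt)
      (fun s hs => (hdf s (interior_subset hs)).differentiableWithinAt)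
      (fun s hs => (hf' s (interior_subset hs)).le)
  -- If `f τ = T`, then `f ≤ T` is only known to the right of `τ`.
  have hVright : ∀ᶠ s in 𝓝[≥] τ, deriv f s ^ 2 = reducedPotential N M C κt (f s) := by
    filter_upwards [Ico_mem_nhdsGE hτ.2] with s hs
    have hs' : s ∈ Ioo a b := ⟨hτ.1.trans_le hs.1, hs.2⟩
    exact hV s hs' ((hanti hτ hs' hs.1).trans hfT)
  have h := two_mul_deriv_deriv_eq_of_sq_deriv_eq (hdf τ hτ) (hdf' τ hτ) (hf' τ hτ).ne
    (hasDerivAt_reducedPotential _ _ _ _ _) hVright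
  linarith

theorem deriv_deriv_add_mul_sq_eq {f : ℝ → ℝ} {N M C κt τ : ℝ}
    (hV : deriv f τ ^ 2 = reducedPotential N M C κt (f τ))
    (hode : deriv (deriv f) τ = -(N * M) * exp (-(2 * N) * f τ) + C * exp (2 * f τ)) :
    deriv (deriv f) τ + N * deriv f τ ^ 2 = (N + 1) * C * exp (2 * f τ) - N * κt := by
  rw [hode, hV, reducedPotential]; ring

theorem one_le_abs_and_exp_le_of_sq_eq {N M C κt x y : ℝ} (hM : 0 < M) (hx : x ≤ 0)
    (hy : y ^ 2 = reducedPotential N M C κt x)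
    (hlarge : 2 * (|C| + |κt| + 1) ≤ M * exp (-(2 * N) * x)) :
    1 ≤ |y| ∧ exp (-(2 * N) * x) ≤ 2 / M * y ^ 2 := by
  have hexp : exp (2 * x) ≤ 1 := exp_le_one_iff.mpr (by linarith)
  have hrest : |C * exp (2 * x) - κt| ≤ |C| + |κt| := by
    calc |C * exp (2 * x) - κt| ≤ |C| * exp (2 * x) + |κt| := by
          simpa [abs_mul] using abs_sub (C * exp (2 * x)) κt
      _ ≤ |C| + |κt| := by nlinarith [abs_nonneg C]
  have hy2 : M * exp (-(2 * N) * x) ≤ 2 * y ^ 2 - 2 := by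
    rw [hy, reducedPotential]
    linarith [neg_abs_le (C * exp (2 * x) - κt)]
  refine ⟨(one_le_sq_iff_one_le_abs y).mp (by linarith [abs_nonneg C, abs_nonneg κt]), ?_⟩
  rw [div_mul_eq_mul_div, le_div_iff₀ hM]
  linarith

/-- Functions that agree on `Ω` with a polynomial in `f'`, `e^{2f}` and `e^{-bf}` of weight at
most `k`, where `f'` has weight 1, `e^{-bf}` weight 2 and `e^{2f}` weight 0. -/
inductive WeightedPoly (f : ℝ → ℝ) (b : ℝ) (Ω : Set ℝ) : ℕ → (ℝ → ℝ) → Prop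
  | const (c : ℝ) : WeightedPoly f b Ω 0 fun _ => c
  | exp_two : WeightedPoly f b Ω 0 fun τ => exp (2 * f τ)
  | exp_neg : WeightedPoly f b Ω 2 fun τ => exp (-b * f τ)
  | deriv_self : WeightedPoly f b Ω 1 (deriv f)
  | add {k : ℕ} {g h : ℝ → ℝ} : WeightedPoly f b Ω k g → WeightedPoly f b Ω k h →
      WeightedPoly f b Ω k fun τ => g τ + h τ
  | mul {k l : ℕ} {g h : ℝ → ℝ} : WeightedPoly f b Ω k g → WeightedPoly f b Ω l h →
      WeightedPoly f b Ω (k + l) fun τ => g τ * h τ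
  | mono {k l : ℕ} {g : ℝ → ℝ} : k ≤ l → WeightedPoly f b Ω k g → WeightedPoly f b Ω l g
  | congr {k : ℕ} {g h : ℝ → ℝ} : WeightedPoly f b Ω k g → EqOn g h Ω → WeightedPoly f b Ω k h

namespace WeightedPoly

variable {f : ℝ → ℝ} {b : ℝ} {Ω : Set ℝ}

theorem exists_abs_le {K : ℝ} (hK : 0 ≤ K) (hderiv : ∀ τ ∈ Ω, 1 ≤ |deriv f τ|)
    (hexp_two : ∀ τ ∈ Ω, exp (2 * f τ) ≤ 1)
    (hexp_neg : ∀ τ ∈ Ω, exp (-b * f τ) ≤ K * deriv f τ ^ 2)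
    {k : ℕ} {g : ℝ → ℝ} (hg : WeightedPoly f b Ω k g) :
    ∃ c, 0 ≤ c ∧ ∀ τ ∈ Ω, |g τ| ≤ c * |deriv f τ| ^ k := by
  induction hg with
  | const c => exact ⟨|c|, abs_nonneg c, fun τ _ => by simp⟩
  | exp_two => exact ⟨1, zero_le_one, fun τ hτ => by simpa using hexp_two τ hτ⟩
  | exp_neg => exact ⟨K, hK, fun τ hτ => by simpa using hexp_neg τ hτ⟩
  | deriv_self => exact ⟨1, zero_le_one, fun τ _ => by simp⟩
  | add _ _ ihg ihh =>
    obtain ⟨cg, hcg, hg⟩ := ihg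
    obtain ⟨ch, hch, hh⟩ := ihh
    refine ⟨cg + ch, add_nonneg hcg hch, fun τ hτ => ?_⟩
    calc |_ + _| ≤ |_| + |_| := abs_add_le _ _
      _ ≤ cg * |deriv f τ| ^ _ + ch * |deriv f τ| ^ _ := add_le_add (hg τ hτ) (hh τ hτ)
      _ = _ := by ring
  | mul _ _ ihg ihh =>
    obtain ⟨cg, hcg, hg⟩ := ihg
    obtain ⟨ch, hch, hh⟩ := ihh
    refine ⟨cg * ch, mul_nonneg hcg hch, fun τ hτ => ?_⟩
    calc |_ * _| = |_| * |_| := abs_mul _ _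
      _ ≤ (cg * |deriv f τ| ^ _) * (ch * |deriv f τ| ^ _) :=
          mul_le_mul (hg τ hτ) (hh τ hτ) (abs_nonneg _) (by positivity)
      _ = _ := by ring
  | mono hkl _ ih =>
    obtain ⟨c, hc, hg⟩ := ih
    exact ⟨c, hc, fun τ hτ => (hg τ hτ).trans
      (mul_le_mul_of_nonneg_left (pow_le_pow_right₀ (hderiv τ hτ) hkl) hc)⟩
  | congr _ heq ih =>
    obtain ⟨c, hc, hg⟩ := ih
    exact ⟨c, hc, fun τ hτ => heq hτ ▸ hg τ hτ⟩

section Derivatives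

variable {β C : ℝ} (hΩ : IsOpen Ω) (hf : ∀ τ ∈ Ω, DifferentiableAt ℝ f τ)
  (hf' : ∀ τ ∈ Ω, DifferentiableAt ℝ (deriv f) τ)
  (hode : ∀ τ ∈ Ω, deriv (deriv f) τ = β * exp (-b * f τ) + C * exp (2 * f τ))
include hΩ hf hf' hode

theorem differentiableAt_and_deriv {k : ℕ} {g : ℝ → ℝ} (hg : WeightedPoly f b Ω k g) :
    (∀ τ ∈ Ω, DifferentiableAt ℝ g τ) ∧ WeightedPoly f b Ω (k + 1) (deriv g) := by
  induction hg with
  | const c => exact ⟨fun _ _ => differentiableAt_const c,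
      ((const 0).mono (Nat.zero_le _)).congr fun τ _ => by simp⟩
  | exp_two =>
    refine ⟨fun τ hτ => ((hf τ hτ).const_mul 2).exp,
      (mul (const 2) (mul deriv_self exp_two)).congr fun τ hτ => ?_⟩
    rw [(((hf τ hτ).hasDerivAt.const_mul 2).exp).deriv]; ring
  | exp_neg =>
    refine ⟨fun τ hτ => ((hf τ hτ).const_mul (-b)).exp,
      (mul (const (-b)) (mul deriv_self exp_neg)).congr fun τ hτ => ?_⟩
    rw [(((hf τ hτ).hasDerivAt.const_mul (-b)).exp).deriv]; ring
  | deriv_self =>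
    exact ⟨hf', (add (mul (const β) exp_neg) ((mul (const C) exp_two).mono (by omega))).congr
      fun τ hτ => (hode τ hτ).symm⟩
  | add _ _ ihg ihh =>
    refine ⟨fun τ hτ => (ihg.1 τ hτ).add (ihh.1 τ hτ), (add ihg.2 ihh.2).congr fun τ hτ => ?_⟩
    rw [deriv_fun_add (ihg.1 τ hτ) (ihh.1 τ hτ)]
  | mul hg hh ihg ihh =>
    refine ⟨fun τ hτ => (ihg.1 τ hτ).mul (ihh.1 τ hτ),
      (add ((mul ihg.2 hh).mono (by omega)) ((mul hg ihh.2).mono (by omega))).congr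
        fun τ hτ => ?_⟩
    rw [deriv_fun_mul (ihg.1 τ hτ) (ihh.1 τ hτ)]
  | mono hkl _ ih => exact ⟨ih.1, ih.2.mono (by omega)⟩
  | congr _ heq ih =>
    have hev : ∀ τ ∈ Ω, _ =ᶠ[𝓝 τ] _ := fun τ hτ => eventually_of_mem (hΩ.mem_nhds hτ) heq
    exact ⟨fun τ hτ => (ih.1 τ hτ).congr_of_eventuallyEq (hev τ hτ).symm,
      ih.2.congr fun τ hτ => (hev τ hτ).deriv_eq⟩

theorem iteratedDeriv {k : ℕ} {g : ℝ → ℝ} (hg : WeightedPoly f b Ω k g) (j : ℕ) :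
    WeightedPoly f b Ω (k + j) (_root_.iteratedDeriv j g) := by
  induction j with
  | zero => simpa using hg
  | succ j ih =>
    rw [iteratedDeriv_succ]
    exact (differentiableAt_and_deriv hΩ hf hf' hode ih).2

end Derivatives

end WeightedPoly

section Singularity

variable {f : ℝ → ℝ} {N M C κt : ℝ}

theorem tendsto_sq_deriv_mul_exp (hN : 0 < N) (hfb : Tendsto f (𝓝[<] 0) atBot)
    (hV : ∀ᶠ τ in 𝓝[<] 0, deriv f τ ^ 2 = reducedPotential N M C κt (f τ)) :
    Tendsto (fun τ => deriv f τ ^ 2 * exp (2 * N * f τ)) (𝓝[<] 0) (𝓝 M) := by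
  have hexp : ∀ c > 0, Tendsto (fun τ => exp (c * f τ)) (𝓝[<] 0) (𝓝 0) :=
    fun c hc => tendsto_exp_atBot.comp (hfb.const_mul_atBot hc)
  have hlim := (tendsto_const_nhds (x := M)).add
    (((hexp (2 * N + 2) (by positivity)).const_mul C).sub
      ((hexp (2 * N) (by positivity)).const_mul κt))
  rw [mul_zero, mul_zero, sub_zero, add_zero] at hlim
  refine hlim.congr' ?_
  filter_upwards [hV] with τ hτ
  have h1 : exp (-(2 * N) * f τ) * exp (2 * N * f τ) = 1 := by
    rw [← exp_add, neg_mul, neg_add_cancel, exp_zero]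
  have h2 : exp (2 * f τ) * exp (2 * N * f τ) = exp ((2 * N + 2) * f τ) := by
    rw [← exp_add]; ring_nf
  rw [hτ, reducedPotential]
  linear_combination -M * h1 - C * h2

theorem tendsto_deriv_deriv_add_mul_sq (hfb : Tendsto f (𝓝[<] 0) atBot)
    (hV : ∀ᶠ τ in 𝓝[<] 0, deriv f τ ^ 2 = reducedPotential N M C κt (f τ))
    (hode : ∀ᶠ τ in 𝓝[<] 0,
      deriv (deriv f) τ = -(N * M) * exp (-(2 * N) * f τ) + C * exp (2 * f τ)) :
    Tendsto (fun τ => deriv (deriv f) τ + N * deriv f τ ^ 2) (𝓝[<] 0) (𝓝 (-N * κt)) := by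
  have hlim := ((tendsto_exp_atBot.comp (hfb.const_mul_atBot two_pos)).const_mul
    ((N + 1) * C)).sub_const (N * κt)
  rw [mul_zero, zero_sub, ← neg_mul] at hlim
  refine hlim.congr' ?_
  filter_upwards [hV, hode] with τ hτV hτode
  exact (deriv_deriv_add_mul_sq_eq hτV hτode).symm

theorem exists_iteratedDeriv_bounds (hN : 0 < N) (hM : 0 < M)
    (hfb : Tendsto f (𝓝[<] 0) atBot)
    (hdf : ∀ᶠ τ in 𝓝[<] 0, DifferentiableAt ℝ f τ)
    (hdf' : ∀ᶠ τ in 𝓝[<] 0, DifferentiableAt ℝ (deriv f) τ)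
    (hV : ∀ᶠ τ in 𝓝[<] 0, deriv f τ ^ 2 = reducedPotential N M C κt (f τ))
    (hode : ∀ᶠ τ in 𝓝[<] 0,
      deriv (deriv f) τ = -(N * M) * exp (-(2 * N) * f τ) + C * exp (2 * f τ)) :
    ∃ δ : ℝ, 0 < δ ∧ ∀ k : ℕ, 1 ≤ k → ∃ c : ℝ, ∀ τ ∈ Ioo (-δ) (0 : ℝ),
      |iteratedDeriv k (fun s => deriv (deriv f) s + N * deriv f s ^ 2) τ|
          ≤ c * |deriv f τ| ^ k
        ∧ |iteratedDeriv k f τ| ≤ c * |deriv f τ| ^ k := by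
  have hlarge : ∀ᶠ τ in 𝓝[<] 0, 2 * (|C| + |κt| + 1) ≤ M * exp (-(2 * N) * f τ) :=
    ((tendsto_exp_atTop.comp (hfb.const_mul_atBot_of_neg (by linarith))).const_mul_atTop
      hM).eventually_ge_atTop _
  obtain ⟨l, hl, hΩ⟩ := mem_nhdsLT_iff_exists_Ioo_subset.mp
    (hdf.and <| hdf'.and <| hV.and <| hode.and <| hlarge.and <| hfb.eventually_le_atBot 0)
  simp only [subset_def, mem_ofPred_eq, forall₂_and] at hΩ
  obtain ⟨hdfΩ, hdf'Ω, hVΩ, hodeΩ, hlargeΩ, hnegΩ⟩ := hΩ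
  have hbounds : ∀ τ ∈ Ioo l 0,
      1 ≤ |deriv f τ| ∧ exp (-(2 * N) * f τ) ≤ 2 / M * deriv f τ ^ 2 := fun τ hτ =>
    one_le_abs_and_exp_le_of_sq_eq hM (hnegΩ τ hτ) (hVΩ τ hτ) (hlargeΩ τ hτ)
  have hbound : ∀ {k : ℕ} {g : ℝ → ℝ}, WeightedPoly f (2 * N) (Ioo l 0) k g →
      ∀ j, ∃ c, ∀ τ ∈ Ioo l 0, |iteratedDeriv j g τ| ≤ c * |deriv f τ| ^ (k + j) :=
    fun hg j =>
      have ⟨c, _, hc⟩ := (hg.iteratedDeriv isOpen_Ioo hdfΩ hdf'Ω hodeΩ j).exists_abs_le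
        (by positivity) (fun τ hτ => (hbounds τ hτ).1)
        (fun τ hτ => exp_le_one_iff.mpr (by linarith [hnegΩ τ hτ]))
        (fun τ hτ => (hbounds τ hτ).2)
      ⟨c, hc⟩
  have hsum : WeightedPoly f (2 * N) (Ioo l 0) 0
      (fun s => deriv (deriv f) s + N * deriv f s ^ 2) :=
    (WeightedPoly.add (.mul (.const ((N + 1) * C)) .exp_two) (.const (-(N * κt)))).congr
      fun τ hτ => by rw [deriv_deriv_add_mul_sq_eq (hVΩ τ hτ) (hodeΩ τ hτ)]; ring
  refine ⟨-l, neg_pos.mpr hl, fun k hk => ?_⟩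
  obtain ⟨j, rfl⟩ : ∃ j, k = j + 1 := ⟨k - 1, by omega⟩
  obtain ⟨c₁, hc₁⟩ := hbound hsum (j + 1)
  obtain ⟨c₂, hc₂⟩ := hbound .deriv_self j
  refine ⟨max c₁ c₂, fun τ hτ => ?_⟩
  rw [neg_neg] at hτ
  have hpow : 0 ≤ |deriv f τ| ^ (j + 1) := by positivity
  constructor
  · calc _ ≤ c₁ * |deriv f τ| ^ (0 + (j + 1)) := hc₁ τ hτ
      _ ≤ _ := by rw [zero_add]; exact mul_le_mul_of_nonneg_right (le_max_left _ _) hpow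
  · calc _ ≤ c₂ * |deriv f τ| ^ (1 + j) := iteratedDeriv_succ' (f := f) ▸ hc₂ τ hτ
      _ ≤ _ := by rw [add_comm]; exact mul_le_mul_of_nonneg_right (le_max_right _ _) hpow

theorem arwConds_of_reducedPotential (hN : 0 < N) (hM : 0 < M)
    (hfb : Tendsto f (𝓝[<] 0) atBot)
    (hdf : ∀ᶠ τ in 𝓝[<] 0, DifferentiableAt ℝ f τ)
    (hdf' : ∀ᶠ τ in 𝓝[<] 0, DifferentiableAt ℝ (deriv f) τ)
    (hV : ∀ᶠ τ in 𝓝[<] 0, deriv f τ ^ 2 = reducedPotential N M C κt (f τ))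
    (hode : ∀ᶠ τ in 𝓝[<] 0,
      deriv (deriv f) τ = -(N * M) * exp (-(2 * N) * f τ) + C * exp (2 * f τ)) :
    ARWConds N M f :=
  ⟨tendsto_sq_deriv_mul_exp hN hfb hV, ⟨_, tendsto_deriv_deriv_add_mul_sq hfb hV hode⟩,
    exists_iteratedDeriv_bounds hN hM hfb hdf hdf' hV hode⟩

end Singularity

theorem arw_exceptional_gamma_sufficient_general
    (n : ℕ) (hn : 3 ≤ n)
    (m Λ κt κ σ ω₀ ρ₀ : ℝ)
    (hκ : κ ≠ 0) (hρ₀ : 0 < ρ₀)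
    (lam μt : ℝ → ℝ)
    (hμt : ∀ t : ℝ, HasDerivAt μt (lam t) t)
    (hμt0 : Filter.Tendsto μt Filter.atBot (nhds 0))
    (a : ℝ) (ha : 0 < a) (f : ℝ → ℝ)
    (hf : ContDiffOn ℝ (⊤ : ℕ∞) f (Set.Ioo (-a) 0))
    (hf' : ∀ τ ∈ Set.Ioo (-a) (0:ℝ), deriv f τ < 0)
    (hfb : Filter.Tendsto f (nhdsWithin 0 (Set.Iio 0)) Filter.atBot)
    (hFried : ∀ τ ∈ Set.Ioo (-a) (0:ℝ),
      (deriv f τ) ^ 2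
        = m * Real.exp (-((n : ℝ) - 1) * f τ)
          + (2 * Λ / ((n : ℝ) * ((n : ℝ) + 1))) * Real.exp (2 * f τ) - κt
          + (κ ^ 2 / (n : ℝ) ^ 2)
            * (σ + ρ₀ * Real.exp (-((n : ℝ) + ω₀) * f τ - μt (f τ))) ^ 2
            * Real.exp (2 * f τ))
    (T : ℝ) (hT : ∀ t ≤ T, lam t = 0)
    (hω₀ : ω₀ = 1)
    (hfine : m + 2 * (κ ^ 2 / (n : ℝ) ^ 2) * σ * ρ₀ = 0) :
    Filter.Tendsto (fun τ => (deriv f τ) ^ 2 * Real.exp (2 * (n : ℝ) * f τ))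
        (nhdsWithin 0 (Set.Iio 0)) (nhds (κ ^ 2 / (n : ℝ) ^ 2 * ρ₀ ^ 2))
      ∧ (∀ τ ∈ Set.Ioo (-a) (0:ℝ), f τ ≤ T →
          deriv (deriv f) τ + (n : ℝ) * (deriv f τ) ^ 2
            = 2 * Λ / (n : ℝ) * Real.exp (2 * f τ) - (n : ℝ) * κt
              + (κ ^ 2 / (n : ℝ) ^ 2) * ((n : ℝ) + 1) * σ ^ 2 * Real.exp (2 * f τ))
      ∧ ARWConds (n : ℝ) (κ ^ 2 / (n : ℝ) ^ 2 * ρ₀ ^ 2) f := by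
  have hn0 : (0 : ℝ) < n := by exact_mod_cast (show 0 < n by omega)
  set q : ℝ := κ ^ 2 / (n : ℝ) ^ 2
  set C : ℝ := 2 * Λ / ((n : ℝ) * ((n : ℝ) + 1)) + q * σ ^ 2 with hC
  have hM : 0 < q * ρ₀ ^ 2 := by positivity
  have hdf : ∀ τ ∈ Ioo (-a) (0 : ℝ), DifferentiableAt ℝ f τ := fun τ hτ =>
    (hf.contDiffAt (isOpen_Ioo.mem_nhds hτ)).differentiableAt (by simp)
  have hdf' : ∀ τ ∈ Ioo (-a) (0 : ℝ), DifferentiableAt ℝ (deriv f) τ := fun τ hτ =>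
    ((hf.deriv_of_isOpen (m := 1) isOpen_Ioo (WithTop.coe_le_coe.mpr le_top)).contDiffAt
      (isOpen_Ioo.mem_nhds hτ)).differentiableAt one_ne_zero
  have hV : ∀ τ ∈ Ioo (-a) (0 : ℝ), f τ ≤ T →
      deriv f τ ^ 2 = reducedPotential n (q * ρ₀ ^ 2) C κt (f τ) := by
    intro τ hτ hfT
    rw [hFried τ hτ, hω₀, eq_zero_of_hasDerivAt_of_tendsto_atBot hμt hT hμt0 hfT, sub_zero,
      friedmann_eq_reducedPotential (by linear_combination hfine)]
  have hode : ∀ τ ∈ Ioo (-a) (0 : ℝ), f τ ≤ T → deriv (deriv f) τ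
      = -(n * (q * ρ₀ ^ 2)) * exp (-(2 * n) * f τ) + C * exp (2 * f τ) :=
    fun τ hτ => deriv_deriv_eq_of_sq_deriv_eq_reducedPotential hdf hdf' hf' hV hτ
  have hnear : ∀ᶠ τ in 𝓝[<] 0, τ ∈ Ioo (-a) (0 : ℝ) ∧ f τ ≤ T :=
    Eventually.and (Ioo_mem_nhdsLT (neg_lt_zero.mpr ha)) (hfb.eventually_le_atBot T)
  have hARW := arwConds_of_reducedPotential hn0 hM hfb
    (hnear.mono fun τ h => hdf τ h.1) (hnear.mono fun τ h => hdf' τ h.1)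
    (hnear.mono fun τ h => hV τ h.1 h.2) (hnear.mono fun τ h => hode τ h.1 h.2)
  refine ⟨hARW.1, fun τ hτ hfT => ?_, hARW⟩
  rw [deriv_deriv_add_mul_sq_eq (hV τ hτ hfT) (hode τ hτ hfT), hC]
  field_simp
  ring

/-- If `lam` vanishes on `(-∞, T]`, `ω₀ = 1` and `σ` is fine-tuned so that
`m + 2 (κ²/n²) σ ρ₀ = 0`, then every brane scale function satisfies
`f'² e^{2nf} → (κ²/n²) ρ₀²`, the identity
`f'' + n f'² = (2Λ/n) e^{2f} - n κt + (κ²/n²)(n+1) σ² e^{2f}` wherever `f ≤ T`, and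
the ARW conditions with constant `γ = n` and mass `(κ²/n²) ρ₀²`. -/
theorem arw_exceptional_gamma_sufficient
    (n : ℕ) (hn : 3 ≤ n)
    (m Λ κt κ σ ω₀ ρ₀ : ℝ)
    (hm : 0 < m) (hΛ : Λ ≤ 0)
    (hκt : κt = -1 ∨ κt = 0 ∨ κt = 1) (hΛκt : Λ = 0 → κt = 1)
    (hκ : κ ≠ 0) (hρ₀ : 0 < ρ₀)
    (lam μt : ℝ → ℝ)
    (hlam : ContDiff ℝ (⊤ : ℕ∞) lam)
    (hlam0 : Filter.Tendsto lam Filter.atBot (nhds 0))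
    (hμt : ∀ t : ℝ, HasDerivAt μt (lam t) t)
    (hμt0 : Filter.Tendsto μt Filter.atBot (nhds 0))
    (a : ℝ) (ha : 0 < a) (f : ℝ → ℝ)
    (hf : ContDiffOn ℝ (⊤ : ℕ∞) f (Set.Ioo (-a) 0))
    (hf' : ∀ τ ∈ Set.Ioo (-a) (0:ℝ), deriv f τ < 0)
    (hfb : Filter.Tendsto f (nhdsWithin 0 (Set.Iio 0)) Filter.atBot)
    (hFried : ∀ τ ∈ Set.Ioo (-a) (0:ℝ),
      (deriv f τ) ^ 2
        = m * Real.exp (-((n : ℝ) - 1) * f τ)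
          + (2 * Λ / ((n : ℝ) * ((n : ℝ) + 1))) * Real.exp (2 * f τ) - κt
          + (κ ^ 2 / (n : ℝ) ^ 2)
            * (σ + ρ₀ * Real.exp (-((n : ℝ) + ω₀) * f τ - μt (f τ))) ^ 2
            * Real.exp (2 * f τ))
    (T : ℝ) (hT : ∀ t ≤ T, lam t = 0)
    (hω₀ : ω₀ = 1)
    (hfine : m + 2 * (κ ^ 2 / (n : ℝ) ^ 2) * σ * ρ₀ = 0) :
    Filter.Tendsto (fun τ => (deriv f τ) ^ 2 * Real.exp (2 * (n : ℝ) * f τ))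
        (nhdsWithin 0 (Set.Iio 0)) (nhds (κ ^ 2 / (n : ℝ) ^ 2 * ρ₀ ^ 2))
      ∧ (∀ τ ∈ Set.Ioo (-a) (0:ℝ), f τ ≤ T →
          deriv (deriv f) τ + (n : ℝ) * (deriv f τ) ^ 2
            = 2 * Λ / (n : ℝ) * Real.exp (2 * f τ) - (n : ℝ) * κt
              + (κ ^ 2 / (n : ℝ) ^ 2) * ((n : ℝ) + 1) * σ ^ 2 * Real.exp (2 * f τ))
      ∧ ARWConds (n : ℝ) (κ ^ 2 / (n : ℝ) ^ 2 * ρ₀ ^ 2) f :=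
  arw_exceptional_gamma_sufficient_general n hn m Λ κt κ σ ω₀ ρ₀ hκ hρ₀ lam μt hμt hμt0 a ha f hf
    hf' hfb hFried T hT hω₀ hfine
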